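/- arXiv:2507.18776 — 7 statements merged into one kernel-verified Lean document; each statement's English description precedes it below -/
import Mathlib

section
/- If G is a regular K3-irregular simple graph, then its complement Ḡ is also a regular K3-irregular graph. -/
/-!
Let `A` be the adjacency matrix of `G`, `J` the all-ones matrix and `n = |V|`. The diagonal entry
`(A³)ᵥᵥ` counts closed walks of length three at `v`, i.e. twice the triangles through `v`. The
complement has adjacency matrix `J - (1 + A)`, and if `G` is `r`-regular then `J` and `1 + A`
commute, with `J (1 + A) = (1 + r) J`. Expanding the cube therefore gives
`2 (K3deg G v + K3deg Gᶜ v) = (n - 1)(n - 2) - 3r(n - 1 - r)` for every vertex `v`, so `G` and `Gᶜ`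
have the same pairs of vertices with equal `K₃`-degrees.
-/

/-- The `K₃`-degree (triangle-degree) of a vertex `v` in a finite simple graph `G`:
the number of triangles (3-cliques) of `G` containing `v`. -/
def K3deg {V : Type*} (G : SimpleGraph V) [Fintype V] [DecidableEq V] [DecidableRel G.Adj]
    (v : V) : ℕ :=
  ((G.cliqueFinset 3).filter (fun t => v ∈ t)).card

open Finset Matrix

theorem sub_pow_three_of_mul_eq_smul {R : Type*} [Ring R] {J B : R} {n k : ℤ}
    (hJJ : J * J = n • J) (hJB : J * B = k • J) (hBJ : B * J = k • J) :
    (J - B) ^ 3 = (n ^ 2 - 3 * n * k + 3 * k ^ 2) • J - B ^ 3 := by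
  have hsq : (J - B) ^ 2 = (n - 2 * k) • J + B ^ 2 := by
    rw [sq, sq, sub_mul, mul_sub, mul_sub, hJJ, hJB, hBJ]
    module
  rw [pow_succ, hsq, add_mul, mul_sub, mul_sub, smul_mul_assoc, smul_mul_assoc, hJJ, hJB,
    sq, mul_assoc, hBJ, mul_smul_comm, hBJ, ← pow_two, ← pow_succ]
  module

namespace SimpleGraph

variable {V : Type*} [Fintype V]

theorem IsRegularOfDegree.adjMatrix_mul_of_one {G : SimpleGraph V} [DecidableRel G.Adj] {r : ℕ}
    (h : G.IsRegularOfDegree r) :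
    G.adjMatrix ℤ * of 1 = (r : ℤ) • of 1 := by
  ext v w
  simp [h v]

theorem IsRegularOfDegree.of_one_mul_adjMatrix {G : SimpleGraph V} [DecidableRel G.Adj] {r : ℕ}
    (h : G.IsRegularOfDegree r) :
    of 1 * G.adjMatrix ℤ = (r : ℤ) • of 1 := by
  ext v w
  simp [h w]

variable [DecidableEq V] (G : SimpleGraph V) [DecidableRel G.Adj]

theorem card_adj_pairs_eq_two_mul_K3deg (v : V) :
    #{p : V × V | G.Adj v p.1 ∧ G.Adj v p.2 ∧ G.Adj p.1 p.2} = 2 * K3deg G v := by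
  have hmaps : ∀ p ∈ ({p : V × V | G.Adj v p.1 ∧ G.Adj v p.2 ∧ G.Adj p.1 p.2} : Finset _),
      ({v, p.1, p.2} : Finset V) ∈ (G.cliqueFinset 3).filter (v ∈ ·) := by
    intro p hp
    simp only [mem_filter, mem_univ, true_and] at hp
    simp [is3Clique_triple_iff.2 hp]
  rw [card_eq_sum_card_fiberwise hmaps, K3deg, mul_comm, ← smul_eq_mul, ← sum_const]
  refine sum_congr rfl fun t ht => ?_
  simp only [mem_filter, mem_cliqueFinset_iff] at ht
  obtain ⟨htri, hvt⟩ := ht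
  have hfiber : ({p : V × V | G.Adj v p.1 ∧ G.Adj v p.2 ∧ G.Adj p.1 p.2} : Finset _).filter
      (fun p => ({v, p.1, p.2} : Finset V) = t) = (t.erase v).offDiag := by
    ext ⟨x, y⟩
    simp only [mem_filter, mem_univ, true_and, mem_offDiag, mem_erase]
    constructor
    · rintro ⟨⟨hvx, hvy, hxy⟩, rfl⟩
      simp [hvx.ne', hvy.ne', hxy.ne]
    · rintro ⟨⟨hxv, hxt⟩, ⟨hyv, hyt⟩, hxy⟩
      refine ⟨⟨htri.1 hvt hxt (Ne.symm hxv), htri.1 hvt hyt (Ne.symm hyv), htri.1 hxt hyt hxy⟩, ?_⟩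
      refine eq_of_subset_of_card_le (by simp [insert_subset_iff, *]) ?_
      rw [htri.2, card_insert_of_notMem (by simp [Ne.symm hxv, Ne.symm hyv]),
        card_pair hxy]
  rw [hfiber, offDiag_card, card_erase_of_mem hvt, htri.2]

theorem adjMatrix_pow_three_apply_self (v : V) :
    (G.adjMatrix ℤ ^ 3) v v = 2 * K3deg G v := by
  have hcard := congrArg (Nat.cast (R := ℤ)) (card_adj_pairs_eq_two_mul_K3deg G v)
  push_cast at hcard
  rw [← hcard, card_filter, Nat.cast_sum, Fintype.sum_prod_type, pow_succ, pow_two]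
  simp only [mul_apply, adjMatrix_apply, sum_mul]
  refine sum_congr rfl fun x _ => sum_congr rfl fun y _ => ?_
  by_cases hvx : G.Adj v x <;> by_cases hvy : G.Adj v y <;> by_cases hxy : G.Adj x y <;>
    simp [hvx, hvy, hxy, adj_comm]

variable {G}

theorem IsRegularOfDegree.two_mul_K3deg_add_K3deg_compl {r : ℕ} (h : G.IsRegularOfDegree r)
    (v : V) :
    2 * ((K3deg G v + K3deg Gᶜ v : ℕ) : ℤ) =
      (Fintype.card V - 1) * (Fintype.card V - 2) - 3 * r * (Fintype.card V - 1 - r) := by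
  set n : ℤ := (Fintype.card V : ℤ)
  set A := G.adjMatrix ℤ
  set J : Matrix V V ℤ := of 1
  have hcompl : Gᶜ.adjMatrix ℤ = J - (1 + A) := by
    rw [← compl_adjMatrix_eq_adjMatrix_compl]
    exact eq_sub_of_add_eq' (one_add_adjMatrix_add_compl_adjMatrix_eq_of_one ℤ G)
  have hJJ : J * J = n • J := by
    ext x y
    simp [J, n, mul_apply]
  have hJB : J * (1 + A) = (1 + r : ℤ) • J := by
    rw [mul_add, mul_one, h.of_one_mul_adjMatrix]
    module
  have hBJ : (1 + A) * J = (1 + r : ℤ) • J := by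
    rw [add_mul, one_mul, h.adjMatrix_mul_of_one]
    module
  have hcube : (1 + A) ^ 3 = 1 + 3 • A + 3 • A ^ 2 + A ^ 3 := by noncomm_ring
  have hA : A v v = 0 := by simp [A]
  have hA2 : (A ^ 2) v v = r := by rw [sq, adjMatrix_mul_self_apply_self, h v]
  have hA3 : (A ^ 3) v v = 2 * K3deg G v := G.adjMatrix_pow_three_apply_self v
  have hc := congr($(sub_pow_three_of_mul_eq_smul hJJ hJB hBJ) v v)
  rw [← hcompl, adjMatrix_pow_three_apply_self, hcube] at hc
  simp only [Matrix.sub_apply, Matrix.add_apply, Matrix.smul_apply, one_apply_eq, hA, hA2, hA3,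
    J, of_apply, Pi.one_apply] at hc
  simp only [smul_eq_mul, nsmul_eq_mul] at hc
  push_cast
  linear_combination hc

end SimpleGraph

theorem stmt1 {V : Type*} [Fintype V] [DecidableEq V] (G : SimpleGraph V) [DecidableRel G.Adj]
    (hreg : ∃ r : ℕ, G.IsRegularOfDegree r)
    (hirr : ∀ u w : V, K3deg G u = K3deg G w → u = w) :
    (∃ s : ℕ, Gᶜ.IsRegularOfDegree s) ∧ (∀ u w : V, K3deg Gᶜ u = K3deg Gᶜ w → u = w) := by
  obtain ⟨r, hr⟩ := hreg
  refine ⟨⟨_, hr.compl⟩, fun u w h => hirr u w ?_⟩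
  have hu := hr.two_mul_K3deg_add_K3deg_compl u
  have hw := hr.two_mul_K3deg_add_K3deg_compl w
  push_cast at hu hw
  rw [h] at hu
  omega
end

section
/- Let G be an r-regular K3-irregular simple graph, let v be a vertex of G with K3-degree d, and let A = N(v) be the neighborhood of v. Then every vertex a ∈ A has at most min(r − 2, d) neighbors inside A. -/
open Finset

namespace SimpleGraph

variable {V W : Type*} {G : SimpleGraph V} {H : SimpleGraph W}

theorem IsNClique.map_embedding {n : ℕ} {s : Finset V} (f : G ↪g H) (h : G.IsNClique n s) :
    H.IsNClique n (s.map f.toEmbedding) := by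
  refine ⟨?_, (card_map _).trans h.card_eq⟩
  rw [coe_map]
  rintro _ ⟨x, hx, rfl⟩ _ ⟨y, hy, rfl⟩ hxy
  exact f.map_adj_iff.mpr (h.isClique hx hy fun hxy' => hxy (congrArg f hxy'))

theorem K3deg_iso_apply [Fintype V] [DecidableEq V] [DecidableRel G.Adj]
    [Fintype W] [DecidableEq W] [DecidableRel H.Adj] (φ : G ≃g H) (x : V) :
    K3deg H (φ x) = K3deg G x := by
  refine (card_nbij' φ.toEquiv.finsetCongr φ.toEquiv.finsetCongr.symm ?_ ?_
    (fun t _ => Equiv.symm_apply_apply _ t) (fun t _ => Equiv.apply_symm_apply _ t)).symm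
  · intro t ht
    simp only [coe_filter, Set.mem_ofPred_eq, mem_cliqueFinset_iff] at ht ⊢
    exact ⟨ht.1.map_embedding φ.toEmbedding, mem_map_of_mem _ ht.2⟩
  · intro t ht
    simp only [coe_filter, Set.mem_ofPred_eq, mem_cliqueFinset_iff] at ht ⊢
    refine ⟨ht.1.map_embedding φ.symm.toEmbedding, ?_⟩
    rw [Equiv.finsetCongr_symm, Equiv.finsetCongr_apply, mem_map_equiv, Equiv.symm_symm]
    exact ht.2

def swapIsoOfTwins [DecidableEq V] (a v : V)
    (h : ∀ x, x ≠ a → x ≠ v → (G.Adj a x ↔ G.Adj v x)) : G ≃g G where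
  toEquiv := Equiv.swap a v
  map_rel_iff' {x y} := by
    simp only [Equiv.swap_apply_def]
    split_ifs <;> grind [G.adj_comm, G.irrefl]

theorem K3deg_eq_of_twins [Fintype V] [DecidableEq V] [DecidableRel G.Adj] {a v : V}
    (h : ∀ x, x ≠ a → x ≠ v → (G.Adj a x ↔ G.Adj v x)) : K3deg G a = K3deg G v := by
  have := K3deg_iso_apply (swapIsoOfTwins a v h) v
  rwa [show swapIsoOfTwins a v h v = a from Equiv.swap_apply_right a v] at this

variable [Fintype V] [DecidableEq V] [DecidableRel G.Adj] {a v : V}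

theorem card_inter_neighborFinset_le_K3deg (hva : G.Adj v a) :
    #(G.neighborFinset a ∩ G.neighborFinset v) ≤ K3deg G v := by
  refine card_le_card_of_injOn (fun b => {v, a, b}) (fun b hb => ?_) (fun b hb b' hb' hbb' => ?_)
  · simp only [coe_inter, Set.mem_inter_iff, mem_coe, mem_neighborFinset] at hb
    simp only [coe_filter, Set.mem_ofPred_eq, mem_cliqueFinset_iff, is3Clique_triple_iff]
    exact ⟨⟨hva, hb.2, hb.1⟩, mem_insert_self v _⟩
  · simp only [coe_inter, Set.mem_inter_iff, mem_coe, mem_neighborFinset] at hb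
    have hb_mem : b ∈ ({v, a, b'} : Finset V) := by
      rw [← show ({v, a, b} : Finset V) = {v, a, b'} from hbb']
      simp
    simp only [mem_insert, mem_singleton] at hb_mem
    rcases hb_mem with rfl | rfl | rfl
    · exact absurd hb.2 G.irrefl
    · exact absurd hb.1 G.irrefl
    · rfl

theorem insert_inter_neighborFinset_subset (hva : G.Adj v a) :
    insert v (G.neighborFinset a ∩ G.neighborFinset v) ⊆ G.neighborFinset a :=
  insert_subset ((G.mem_neighborFinset a v).mpr hva.symm) inter_subset_left

theorem card_inter_neighborFinset_add_one_le_degree (hva : G.Adj v a) :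
    #(G.neighborFinset a ∩ G.neighborFinset v) + 1 ≤ G.degree a := by
  have hv : v ∉ G.neighborFinset a ∩ G.neighborFinset v := by simp
  rw [← card_neighborFinset_eq_degree, ← card_insert_of_notMem hv]
  exact card_le_card (insert_inter_neighborFinset_subset hva)

theorem adj_iff_adj_of_card_inter_add_one_eq_degree (hva : G.Adj v a)
    (hdeg : G.degree a = G.degree v)
    (hcard : #(G.neighborFinset a ∩ G.neighborFinset v) + 1 = G.degree a) :
    ∀ x, x ≠ a → x ≠ v → (G.Adj a x ↔ G.Adj v x) := by
  have eq_of_card {u w : V} (huw : G.Adj u w)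
      (h : #(G.neighborFinset w ∩ G.neighborFinset u) + 1 = G.degree w) :
      insert u (G.neighborFinset w ∩ G.neighborFinset u) = G.neighborFinset w :=
    eq_of_subset_of_card_le (insert_inter_neighborFinset_subset huw)
      (by rw [card_insert_of_notMem (by simp : u ∉ _), h, card_neighborFinset_eq_degree])
  have hNa := eq_of_card hva hcard
  have hNv := eq_of_card hva.symm (by rwa [inter_comm, ← hdeg])
  intro x hxa hxv
  rw [← mem_neighborFinset, ← mem_neighborFinset, ← hNa, ← hNv, inter_comm]
  simp [hxa, hxv]

end SimpleGraph

theorem stmt4 {V : Type*} [Fintype V] [DecidableEq V] (G : SimpleGraph V) [DecidableRel G.Adj]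
    (r : ℕ) (hreg : G.IsRegularOfDegree r)
    (hirr : ∀ u w : V, K3deg G u = K3deg G w → u = w)
    (v : V) (d : ℕ) (hd : K3deg G v = d)
    (A : Finset V) (hA : A = G.neighborFinset v)
    (a : V) (ha : a ∈ A) :
    ((G.neighborFinset a ∩ A).card : ℤ) ≤ min ((r : ℤ) - 2) (d : ℤ) := by
  subst hA hd
  have hva : G.Adj v a := (G.mem_neighborFinset v a).mp ha
  have hle := SimpleGraph.card_inter_neighborFinset_add_one_le_degree hva
  have hne : #(G.neighborFinset a ∩ G.neighborFinset v) + 1 ≠ G.degree a := fun hcard =>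
    have htwins := SimpleGraph.adj_iff_adj_of_card_inter_add_one_eq_degree hva
      (by rw [hreg a, hreg v]) hcard
    G.ne_of_adj hva (hirr a v (SimpleGraph.K3deg_eq_of_twins htwins)).symm
  have hK3 := SimpleGraph.card_inter_neighborFinset_le_K3deg hva
  rw [hreg a] at hle hne
  omega
end

section
/- Let G be an r-regular K3-irregular simple graph and let v be a vertex of G with neighborhood A = N(v). Then for every a ∈ A there exists a' ∈ A with a' ≠ a such that a and a' are not adjacent in G (i.e., the complement of the subgraph induced on A has no isolated vertices). -/
/-!
If `a ∈ N(v)` were adjacent to every other vertex of `N(v)`, then `N(a)` would contain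
`{v} ∪ (N(v) \ {a})`, a set of `r` vertices; by regularity the two sets coincide, so `a` and `v`
have the same neighbours outside `{a, v}`. The transposition of `a` and `v` is then an
automorphism of `G`, so `a` and `v` lie in equally many triangles, contradicting
`K₃`-irregularity.
-/

namespace SimpleGraph

variable {V W : Type*} {G : SimpleGraph V} {G' : SimpleGraph W}

theorem Iso.isNClique_map_iff (e : G ≃g G') {n : ℕ} {s : Finset V} :
    G'.IsNClique n (s.map e.toEquiv.toEmbedding) ↔ G.IsNClique n s := by
  simp [isNClique_iff, isClique_iff, Set.Pairwise, e.map_adj_iff]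

theorem K3deg_iso [Fintype V] [DecidableEq V] [DecidableRel G.Adj]
    [Fintype W] [DecidableEq W] [DecidableRel G'.Adj] (e : G ≃g G') (v : V) :
    K3deg G' (e v) = K3deg G v := by
  unfold K3deg
  refine Finset.card_nbij' (Finset.map e.symm.toEquiv.toEmbedding)
    (Finset.map e.toEquiv.toEmbedding) ?_ ?_ ?_ ?_
  · intro t ht
    rw [Finset.mem_coe, Finset.mem_filter, mem_cliqueFinset_iff] at ht ⊢
    exact ⟨e.symm.isNClique_map_iff.2 ht.1,
      Finset.mem_map.2 ⟨e v, ht.2, e.symm_apply_apply v⟩⟩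
  · intro t ht
    rw [Finset.mem_coe, Finset.mem_filter, mem_cliqueFinset_iff] at ht ⊢
    exact ⟨e.isNClique_map_iff.2 ht.1, Finset.mem_map.2 ⟨v, ht.2, rfl⟩⟩
  · intro t _
    simp [Finset.map_map]
  · intro t _
    simp [Finset.map_map]

section Twins

variable [DecidableEq V] {a b : V}

def swapIso (G : SimpleGraph V) (h : ∀ x, x ≠ a → x ≠ b → (G.Adj a x ↔ G.Adj b x)) :
    G ≃g G where
  toEquiv := Equiv.swap a b
  map_rel_iff' {x y} := by
    simp only [Equiv.swap_apply_def]
    split_ifs <;> grind [adj_comm, SimpleGraph.irrefl]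

theorem K3deg_eq_of_adj_iff_adj [Fintype V] [DecidableRel G.Adj]
    (h : ∀ x, x ≠ a → x ≠ b → (G.Adj a x ↔ G.Adj b x)) : K3deg G a = K3deg G b := by
  rw [← K3deg_iso (swapIso G h) a]
  exact congrArg (K3deg G) (Equiv.swap_apply_left a b)

theorem adj_iff_adj_of_neighborFinset_erase_subset [Fintype V] [DecidableRel G.Adj]
    (hba : G.Adj b a) (hdeg : G.degree a ≤ G.degree b)
    (hsub : (G.neighborFinset b).erase a ⊆ G.neighborFinset a) :
    ∀ x, x ≠ a → x ≠ b → (G.Adj a x ↔ G.Adj b x) := by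
  have hb : b ∉ (G.neighborFinset b).erase a := by simp
  have hsub' : insert b ((G.neighborFinset b).erase a) ⊆ G.neighborFinset a :=
    Finset.insert_subset ((G.mem_neighborFinset a b).2 hba.symm) hsub
  have heq : insert b ((G.neighborFinset b).erase a) = G.neighborFinset a := by
    refine Finset.eq_of_subset_of_card_le hsub' ?_
    have hpos : 0 < G.degree b := G.degree_pos_iff_exists_adj b |>.2 ⟨a, hba⟩
    rw [Finset.card_insert_of_notMem hb,
      Finset.card_erase_of_mem ((G.mem_neighborFinset b a).2 hba),
      card_neighborFinset_eq_degree, card_neighborFinset_eq_degree]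
    omega
  intro x hxa hxb
  rw [← mem_neighborFinset, ← mem_neighborFinset, ← heq]
  simp [hxa, hxb]

end Twins

end SimpleGraph

theorem stmt5 {V : Type*} [Fintype V] [DecidableEq V] (G : SimpleGraph V) [DecidableRel G.Adj]
    (r : ℕ) (hreg : G.IsRegularOfDegree r)
    (hirr : ∀ u w : V, K3deg G u = K3deg G w → u = w)
    (v : V) (A : Finset V) (hA : A = G.neighborFinset v)
    (a : V) (ha : a ∈ A) :
    ∃ a' ∈ A, a' ≠ a ∧ ¬ G.Adj a a' := by
  subst hA
  by_contra! hdom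
  have hva : G.Adj v a := (G.mem_neighborFinset v a).1 ha
  have hsub : (G.neighborFinset v).erase a ⊆ G.neighborFinset a := fun x hx =>
    (G.mem_neighborFinset a x).2 (hdom x (Finset.mem_of_mem_erase hx) (Finset.ne_of_mem_erase hx))
  have htwins :=
    G.adj_iff_adj_of_neighborFinset_erase_subset hva (by rw [hreg a, hreg v]) hsub
  exact hva.ne (hirr a v (G.K3deg_eq_of_adj_iff_adj htwins)).symm
end

section
/- Let G be an r-regular simple graph on n vertices, let v be a vertex of G with K3-degree d, and let B = V(G) \ N[v]. Then |B| = n − r − 1 and twice the number of edges of the subgraph induced on B equals nr − 2r² + 2d. -/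
namespace SimpleGraph

open Finset

variable {V : Type*} (G : SimpleGraph V) [DecidableRel G.Adj]

theorem card_interedges_comm (s t : Finset V) :
    #(G.interedges s t) = #(G.interedges t s) :=
  have := G.symm
  Rel.card_interedges_comm s t

variable [DecidableEq V]

theorem card_interedges_union_right (s : Finset V) {t₁ t₂ : Finset V} (h : Disjoint t₁ t₂) :
    #(G.interedges s (t₁ ∪ t₂)) = #(G.interedges s t₁) + #(G.interedges s t₂) := by
  rw [← card_union_of_disjoint (interedges_disjoint_right G s h)]
  congr 1
  ext x
  simp only [mem_union, mem_interedges_iff]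
  tauto

variable [Fintype V]

theorem image_interedges_self (s : Finset V) :
    (G.interedges s s).image Sym2.mk.uncurry = {e ∈ G.edgeFinset | e ∈ s.sym2} := by
  ext e
  induction e using Sym2.ind with
  | _ a b =>
    simp only [mem_image, mem_interedges_iff, mem_filter, mem_edgeFinset, mem_edgeSet,
      mk_mem_sym2_iff, Prod.exists, Function.uncurry_apply_pair, Sym2.eq_iff]
    constructor
    · rintro ⟨x, y, ⟨hx, hy, hxy⟩, ⟨rfl, rfl⟩ | ⟨rfl, rfl⟩⟩
      exacts [⟨hxy, hx, hy⟩, ⟨hxy.symm, hy, hx⟩]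
    · rintro ⟨hab, ha, hb⟩
      exact ⟨a, b, ⟨ha, hb, hab⟩, .inl ⟨rfl, rfl⟩⟩

/-- Every edge inside `s` is hit by exactly the two ordered pairs `(a, b)` and `(b, a)`. -/
theorem card_interedges_self (s : Finset V) :
    #(G.interedges s s) = 2 * #{e ∈ G.edgeFinset | e ∈ s.sym2} := by
  rw [← image_interedges_self, card_eq_sum_card_image Sym2.mk.uncurry, sum_const_nat (m := 2),
    mul_comm]
  intro e he
  induction e using Sym2.ind with
  | _ a b =>
    obtain ⟨hab, ha, hb⟩ : G.Adj a b ∧ a ∈ s ∧ b ∈ s := by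
      simpa only [image_interedges_self, mem_filter, mem_edgeFinset, mem_edgeSet,
        mk_mem_sym2_iff] using he
    rw [card_eq_two]
    refine ⟨(a, b), (b, a), by simp [hab.ne], ?_⟩
    ext ⟨x, y⟩
    simp only [mem_filter, mem_interedges_iff, Function.uncurry_apply_pair, Sym2.eq_iff,
      mem_insert, mem_singleton, Prod.mk.injEq]
    refine ⟨And.right, ?_⟩
    rintro (⟨rfl, rfl⟩ | ⟨rfl, rfl⟩)
    · exact ⟨⟨ha, hb, hab⟩, .inl ⟨rfl, rfl⟩⟩
    · exact ⟨⟨hb, ha, hab.symm⟩, .inr ⟨rfl, rfl⟩⟩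

theorem card_interedges_eq_sum (s t : Finset V) :
    #(G.interedges s t) = ∑ u ∈ s, #(G.neighborFinset u ∩ t) := by
  rw [interedges_def, card_filter, sum_product]
  refine sum_congr rfl fun u _ => ?_
  rw [← card_filter]
  congr 1
  ext w
  simp [and_comm]

theorem card_interedges_singleton_right (s : Finset V) (v : V) :
    #(G.interedges s {v}) = #(s ∩ G.neighborFinset v) := by
  refine card_nbij' Prod.fst (·, v) ?_ ?_ ?_ ?_
  · rintro ⟨u, w⟩ h
    obtain ⟨hu, rfl, huw⟩ := by
      simpa only [mem_coe, mem_interedges_iff, mem_singleton] using h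
    simp [hu, huw.symm]
  · intro u hu
    obtain ⟨hu, hvu⟩ := by simpa only [mem_coe, mem_inter, mem_neighborFinset] using hu
    simp [mem_interedges_iff, hu, hvu.symm]
  · rintro ⟨u, w⟩ h
    obtain ⟨-, rfl, -⟩ := by simpa only [mem_coe, mem_interedges_iff, mem_singleton] using h
    rfl
  · intro u _
    rfl

theorem IsRegularOfDegree.card_interedges_univ {r : ℕ} (hreg : G.IsRegularOfDegree r)
    (s : Finset V) : #(G.interedges s univ) = #s * r := by
  rw [card_interedges_eq_sum, sum_congr rfl fun u _ => ?_, sum_const, smul_eq_mul]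
  rw [inter_univ, card_neighborFinset_eq_degree, hreg u]

theorem card_interedges_univ_eq_add_add (s : Finset V) (v : V) :
    #(G.interedges s univ) = #(s ∩ G.neighborFinset v) + #(G.interedges s (G.neighborFinset v))
      + #(G.interedges s (univ \ insert v (G.neighborFinset v))) := by
  have hdisj : Disjoint {v} (G.neighborFinset v) :=
    disjoint_singleton_left.2 (G.notMem_neighborFinset_self v)
  conv_lhs => rw [← union_sdiff_of_subset (subset_univ (insert v (G.neighborFinset v)))]
  rw [insert_eq, card_interedges_union_right _ _ disjoint_sdiff,
    card_interedges_union_right _ _ hdisj, card_interedges_singleton_right]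

theorem K3deg_eq_card_edges_neighborFinset (v : V) :
    K3deg G v = #{e ∈ G.edgeFinset | e ∈ (G.neighborFinset v).sym2} := by
  symm
  refine card_bij (fun e _ => insert v e.toFinset) ?_ ?_ ?_
  · intro e he
    induction e using Sym2.ind with
    | _ a b =>
      simp only [mem_filter, mem_edgeFinset, mem_edgeSet, mk_mem_sym2_iff,
        mem_neighborFinset] at he
      simp only [mem_filter, mem_cliqueFinset_iff, Sym2.toFinset_mk_eq, mem_insert_self, and_true]
      exact is3Clique_triple_iff.2 ⟨he.2.1, he.2.2, he.1⟩
  · intro e₁ h₁ e₂ h₂ h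
    have hv : ∀ e ∈ ({e ∈ G.edgeFinset | e ∈ (G.neighborFinset v).sym2} : Finset _),
        v ∉ e.toFinset := by
      intro e he hve
      simp only [mem_filter, mem_sym2_iff] at he
      exact G.notMem_neighborFinset_self v (he.2 v (Sym2.mem_toFinset.1 hve))
    have := congrArg (·.erase v) h
    simp only [erase_insert (hv _ h₁), erase_insert (hv _ h₂)] at this
    exact Sym2.ext fun x => by rw [← Sym2.mem_toFinset, this, Sym2.mem_toFinset]
  · intro t ht
    obtain ⟨ht, hvt⟩ := (mem_filter.1 ht).imp_left mem_cliqueFinset_iff.1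
    obtain ⟨a, b, hab, hvab⟩ := card_eq_two.1 (ht.erase_of_mem hvt).card_eq
    have ha : a ∈ t.erase v := by simp [hvab]
    have hb : b ∈ t.erase v := by simp [hvab]
    have hadj_v : ∀ x ∈ t.erase v, G.Adj v x := fun x hx =>
      ht.isClique hvt (mem_of_mem_erase hx) (ne_of_mem_erase hx).symm
    refine ⟨s(a, b), ?_, ?_⟩
    · simp only [mem_filter, mem_edgeFinset, mem_edgeSet, mk_mem_sym2_iff, mem_neighborFinset]
      exact ⟨ht.isClique (mem_of_mem_erase ha) (mem_of_mem_erase hb) hab, hadj_v a ha,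
        hadj_v b hb⟩
    · rw [Sym2.toFinset_mk_eq, ← hvab, insert_erase hvt]

end SimpleGraph

open Finset SimpleGraph in
theorem stmt8 {V : Type*} [Fintype V] [DecidableEq V] (G : SimpleGraph V) [DecidableRel G.Adj]
    (n r : ℕ) (hn : Fintype.card V = n) (hreg : G.IsRegularOfDegree r)
    (v : V) (d : ℕ) (hd : K3deg G v = d)
    (B : Finset V) (hB : B = Finset.univ \ insert v (G.neighborFinset v)) :
    (B.card : ℤ) = (n : ℤ) - r - 1 ∧
    2 * (((G.edgeFinset.filter (fun e => e ∈ B.sym2)).card : ℤ)) =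
      (n : ℤ) * r - 2 * r ^ 2 + 2 * d := by
  subst hn hd
  have hA : #(G.neighborFinset v) = r := (G.card_neighborFinset_eq_degree v).trans (hreg v)
  have hcardB : (#B : ℤ) = Fintype.card V - r - 1 := by
    rw [hB, card_univ_sdiff, Nat.cast_sub (card_le_univ _),
      card_insert_of_notMem (G.notMem_neighborFinset_self v), hA]
    push_cast
    ring
  have hBA : B ∩ G.neighborFinset v = ∅ := by
    rw [hB, ← disjoint_iff_inter_eq_empty]
    exact disjoint_sdiff_self_left.mono_right (subset_insert v _)
  have hcountA := G.card_interedges_univ_eq_add_add (G.neighborFinset v) v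
  rw [hreg.card_interedges_univ, inter_self, card_interedges_self,
    ← K3deg_eq_card_edges_neighborFinset, hA, ← hB] at hcountA
  have hcountB := G.card_interedges_univ_eq_add_add B v
  rw [hreg.card_interedges_univ, hBA, card_empty, ← hB, card_interedges_self,
    card_interedges_comm] at hcountB
  refine ⟨hcardB, ?_⟩
  zify at hcountA hcountB
  linear_combination hcountA - hcountB + r * hcardB
end

section
/- Every 8-regular K3-irregular simple graph has at least 17 vertices. -/
/-!
Write `a v` for the triangle-degree of `v`, `n` for the number of vertices and `R v` for the
set of non-neighbours of `v`. Counting paths of length two from `v` in an 8-regular graph gives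
`2 a v + ∑_{w ∈ R v} |N w ∩ N v| = 56`. Two distinct vertices have at most 7 common neighbours
(equal neighbourhoods would give equal triangle-degrees) and two non-adjacent ones at least
`18 - n`; for `9 ≤ n ≤ 15` this squeezes the `n` distinct values `a v` into too short an interval.

For `n = 16` the seven vertices of `R v` span exactly `a v` edges, whence `4 ≤ a v ≤ 20` (the
value 21 would make `R v` a `K₇`, whose seven vertices would have distinct triangle-degrees in
`[15, 20]`). So the 16 values miss exactly one number of `[4, 20]`, and it is divisible by 3
because `∑ a = 3 · #triangles`; thus 4, 5, 7 and 20 occur. If `a v = 20`, then `R v` is `K₇`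
minus an edge: its vertices have triangle-degree at least 10 and five of them at least 14. Hence
the vertices of triangle-degree 4, 5, 7 lie in `N v`, at most one vertex of `N v` has
triangle-degree at least 14, and bounding each `|N x ∩ N v|` through `a x` gives
`∑_{x ∈ N v} |N x ∩ N v| ≤ 38 < 40 = 2 a v`.
-/

open Finset

lemma mem_of_subset_of_card_eq_add_one {s t : Finset ℕ} {m k : ℕ} (hst : s ⊆ t)
    (hcard : #t = #s + 1) (ht : m ∣ ∑ i ∈ t, i) (hs : m ∣ ∑ i ∈ s, i) (hk : k ∈ t)
    (hkm : ¬ m ∣ k) : k ∈ s := by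
  by_contra hks
  obtain ⟨j, hj⟩ := card_eq_one.1 (by rw [card_sdiff_of_subset hst]; omega : #(t \ s) = 1)
  have hkj : k = j := mem_singleton.1 (hj ▸ mem_sdiff.2 ⟨hk, hks⟩)
  rw [← sum_sdiff hst, hj, sum_singleton, ← hkj] at ht
  exact hkm ((Nat.dvd_add_left hs).1 ht)

lemma card_le_of_two_mul_mem {α : Type*} [Fintype α] {f : α → ℕ} (hf : Function.Injective f)
    {lo hi : ℕ} (h : ∀ a, lo ≤ 2 * f a ∧ 2 * f a ≤ hi) :
    Fintype.card α ≤ hi / 2 + 1 - (lo + 1) / 2 := by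
  have := card_le_card_of_injOn (s := univ) (t := Icc ((lo + 1) / 2) (hi / 2)) f
    (fun a _ => mem_Icc.2 (by have := h a; omega)) hf.injOn
  rwa [card_univ, Nat.card_Icc] at this

namespace SimpleGraph

variable {V : Type*} [Fintype V] [DecidableEq V] (G : SimpleGraph V) [DecidableRel G.Adj]

local notation "N" => G.neighborFinset

/-- Twice the number of edges of `G` inside `s`. -/
def degSumOn (s : Finset V) : ℕ := ∑ x ∈ s, #(N x ∩ s)

variable {G}

lemma sum_card_neighborFinset_inter_comm (A C : Finset V) :
    ∑ x ∈ A, #(N x ∩ C) = ∑ y ∈ C, #(N y ∩ A) := by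
  have h : ∀ (x : V) (s : Finset V), N x ∩ s = s.bipartiteAbove G.Adj x := by
    intro x s; ext y; simp [bipartiteAbove, and_comm]
  have h' : ∀ (y : V) (s : Finset V), N y ∩ s = s.bipartiteBelow G.Adj y := by
    intro y s; ext x; simp [bipartiteBelow, and_comm, G.adj_comm]
  rw [sum_congr rfl fun x _ => congrArg card (h x C),
    sum_congr rfl fun y _ => congrArg card (h' y A)]
  exact sum_card_bipartiteAbove_eq_sum_card_bipartiteBelow _

lemma degSumOn_add_degSumOn_sdiff {A B : Finset V} (h : A ⊆ B) :
    G.degSumOn B + G.degSumOn (B \ A) = G.degSumOn A + 2 * ∑ y ∈ B \ A, #(N y ∩ B) := by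
  have hsplit : ∀ x, #(N x ∩ B) = #(N x ∩ A) + #(N x ∩ (B \ A)) := fun x => by
    rw [← card_union_of_disjoint (disjoint_sdiff.mono inter_subset_right inter_subset_right),
      ← inter_union_distrib_left, union_sdiff_of_subset h]
  have hcross := sum_card_neighborFinset_inter_comm (G := G) A (B \ A)
  unfold degSumOn
  rw [← sum_sdiff h]
  simp only [hsplit, sum_add_distrib]
  omega

lemma degSumOn_insert {w : V} {s : Finset V} (hw : w ∉ s) :
    G.degSumOn (insert w s) = G.degSumOn s + 2 * #(N w ∩ s) := by
  have h := degSumOn_add_degSumOn_sdiff (G := G) (subset_insert w s)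
  rw [insert_sdiff_cancel hw, sum_singleton] at h
  have h0 : G.degSumOn {w} = 0 := by simp [degSumOn]
  rw [inter_insert_of_notMem (G.notMem_neighborFinset_self w)] at h
  omega

lemma degSumOn_mono {A B : Finset V} (h : A ⊆ B) : G.degSumOn A ≤ G.degSumOn B :=
  (sum_le_sum fun _ _ => card_le_card (inter_subset_inter_left h)).trans
    (sum_le_sum_of_subset h)

lemma card_triangles_through_adj {v x : V} (hvx : G.Adj v x) :
    #{t ∈ G.cliqueFinset 3 | v ∈ t ∧ x ∈ t} = #(N x ∩ N v) := by
  have himage : {t ∈ G.cliqueFinset 3 | v ∈ t ∧ x ∈ t} =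
      (N x ∩ N v).image (fun y => {v, x, y}) := by
    ext t
    simp only [mem_filter, mem_cliqueFinset_iff, mem_image, mem_inter, mem_neighborFinset]
    constructor
    · rintro ⟨ht, hv, hx⟩
      have hx' : x ∈ t.erase v := mem_erase.2 ⟨hvx.ne', hx⟩
      obtain ⟨y, hy⟩ := card_eq_one.1 (by
        rw [card_erase_of_mem hx', card_erase_of_mem hv, ht.card_eq] :
          #((t.erase v).erase x) = 1)
      have heq : t = {v, x, y} := by rw [← insert_erase hv, ← insert_erase hx', hy]
      rw [heq, is3Clique_triple_iff] at ht
      exact ⟨y, ⟨ht.2.2, ht.2.1⟩, heq.symm⟩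
    · rintro ⟨y, ⟨hxy, hvy⟩, rfl⟩
      exact ⟨is3Clique_triple_iff.2 ⟨hvx, hvy, hxy⟩, by simp, by simp⟩
  rw [himage, card_image_of_injOn]
  intro y hy y' _ hyy'
  have hmem : y ∈ ({v, x, y'} : Finset V) := by
    simp only at hyy'
    rw [← hyy']; simp
  simp only [coe_inter, Set.mem_inter_iff, mem_coe, mem_neighborFinset] at hy
  simp only [mem_insert, mem_singleton] at hmem
  rcases hmem with rfl | rfl | h
  · exact absurd hy.2 (G.irrefl)
  · exact absurd hy.1 (G.irrefl)
  · exact h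

lemma two_mul_K3deg (v : V) : 2 * K3deg G v = G.degSumOn (N v) := by
  set T := {t ∈ G.cliqueFinset 3 | v ∈ t}
  have hpair : ∀ t ∈ T, #((N v).bipartiteBelow (· ∈ ·) t) = 2 := by
    intro t ht
    rw [mem_filter, mem_cliqueFinset_iff] at ht
    have : (N v).bipartiteBelow (· ∈ ·) t = t.erase v := by
      ext y
      simp only [mem_bipartiteBelow, mem_neighborFinset, mem_erase]
      exact ⟨fun h => ⟨h.1.ne', h.2⟩, fun h => ⟨ht.1.1 ht.2 h.2 h.1.symm, h.2⟩⟩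
    rw [this, card_erase_of_mem ht.2, ht.1.card_eq]
  have htri : ∀ x ∈ N v, #(T.bipartiteAbove (· ∈ ·) x) = #(N x ∩ N v) := by
    intro x hx
    rw [bipartiteAbove, filter_filter, card_triangles_through_adj ((mem_neighborFinset _ _ _).1 hx)]
  calc 2 * K3deg G v = ∑ t ∈ T, #((N v).bipartiteBelow (· ∈ ·) t) := by
        rw [sum_congr rfl hpair, sum_const, smul_eq_mul, mul_comm]; rfl
    _ = G.degSumOn (N v) := by
        rw [← sum_card_bipartiteAbove_eq_sum_card_bipartiteBelow, sum_congr rfl htri]; rfl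

lemma sum_K3deg : ∑ v, K3deg G v = 3 * #(G.cliqueFinset 3) := by
  calc ∑ v, K3deg G v = ∑ t ∈ G.cliqueFinset 3, #(univ.bipartiteBelow (· ∈ ·) t) :=
        sum_card_bipartiteAbove_eq_sum_card_bipartiteBelow _
    _ = 3 * #(G.cliqueFinset 3) := by
        rw [sum_congr rfl fun t ht => ?_, sum_const, smul_eq_mul, mul_comm]
        rw [bipartiteBelow, filter_mem_eq_inter, univ_inter, (mem_cliqueFinset_iff.1 ht).card_eq]

lemma degSumOn_le_two_mul_K3deg {w : V} {s : Finset V} (h : s ⊆ N w) :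
    G.degSumOn s ≤ 2 * K3deg G w :=
  two_mul_K3deg (G := G) w ▸ degSumOn_mono h

section InducedDegrees

variable {B : Finset V} {w : V}

lemma neighborFinset_inter_subset_erase : N w ∩ B ⊆ B.erase w := fun _ hy =>
  mem_erase.2 ⟨((mem_neighborFinset _ _ _).1 (mem_inter.1 hy).1).ne', (mem_inter.1 hy).2⟩

lemma card_neighborFinset_inter_lt (hw : w ∈ B) : #(N w ∩ B) < #B :=
  (card_le_card neighborFinset_inter_subset_erase).trans_lt (card_erase_lt_of_mem hw)

lemma card_neighborFinset_inter_add_two_le {q : V} (hq : q ∈ B) (hw : w ∈ B) (hqw : q ≠ w)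
    (hnadj : ¬ G.Adj q w) : #(N q ∩ B) + 2 ≤ #B := by
  have hsub : N q ∩ B ⊆ (B.erase q).erase w := fun y hy =>
    mem_erase.2 ⟨fun h => hnadj (h ▸ (mem_neighborFinset _ _ _).1 (mem_inter.1 hy).1),
      neighborFinset_inter_subset_erase hy⟩
  have h1 := card_le_card hsub
  have h2 := card_erase_add_one (mem_erase.2 ⟨hqw.symm, hw⟩)
  have h3 := card_erase_add_one hq
  omega

lemma sum_sub_add_degSumOn (B : Finset V) :
    ∑ y ∈ B, (#B - 1 - #(N y ∩ B)) + G.degSumOn B = #B * (#B - 1) := by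
  rw [degSumOn, ← sum_add_distrib, sum_congr rfl fun y hy =>
    Nat.sub_add_cancel (Nat.le_sub_one_of_lt (card_neighborFinset_inter_lt (G := G) hy)),
    sum_const, smul_eq_mul]

/-- `#B - 1 - #(N y ∩ B)` is the degree of `y` in the complement of `G` on `B`. -/
lemma two_mul_sub_le_sum_sub (hw : w ∈ B) :
    2 * (#B - 1 - #(N w ∩ B)) ≤ ∑ y ∈ B, (#B - 1 - #(N y ∩ B)) := by
  have hD : #(B.erase w \ N w) = #B - 1 - #(N w ∩ B) := by
    have h := card_sdiff_add_card_inter (B.erase w) (N w)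
    rw [inter_comm, inter_erase, erase_eq_of_notMem fun h =>
      G.notMem_neighborFinset_self w (mem_inter.1 h).1, card_erase_of_mem hw] at h
    omega
  set D := B.erase w \ N w
  have hwD : w ∉ D := fun h => notMem_erase w B (mem_sdiff.1 h).1
  have hDB : insert w D ⊆ B := insert_subset hw fun y hy => mem_of_mem_erase (mem_sdiff.1 hy).1
  have hpos : ∀ q ∈ D, 1 ≤ #B - 1 - #(N q ∩ B) := by
    intro q hq
    obtain ⟨hqB', hqN⟩ := mem_sdiff.1 hq
    obtain ⟨hqw, hqB⟩ := mem_erase.1 hqB'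
    have := card_neighborFinset_inter_add_two_le (G := G) hqB hw hqw
      (fun h => hqN ((mem_neighborFinset _ _ _).2 h.symm))
    omega
  calc 2 * (#B - 1 - #(N w ∩ B)) ≤ (#B - 1 - #(N w ∩ B)) + ∑ q ∈ D, (#B - 1 - #(N q ∩ B)) := by
        have := card_nsmul_le_sum D _ 1 hpos
        rw [smul_eq_mul, mul_one, hD] at this
        omega
    _ = ∑ y ∈ insert w D, (#B - 1 - #(N y ∩ B)) := by rw [sum_insert hwD]
    _ ≤ ∑ y ∈ B, (#B - 1 - #(N y ∩ B)) := sum_le_sum_of_subset hDB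

lemma degSumOn_le_degSumOn_inter_add (hw : w ∈ B) :
    G.degSumOn B ≤
      G.degSumOn (N w ∩ B) + 2 * (#(N w ∩ B) + (#B - 2) * (#B - 1 - #(N w ∩ B))) := by
  have hwB : w ∈ B \ (N w ∩ B) :=
    mem_sdiff.2 ⟨hw, fun h => G.notMem_neighborFinset_self w (mem_inter.1 h).1⟩
  have hcard : #((B \ (N w ∩ B)).erase w) = #B - 1 - #(N w ∩ B) := by
    rw [card_erase_of_mem hwB, card_sdiff_of_subset inter_subset_right]
    omega
  have hrest : ∀ y ∈ (B \ (N w ∩ B)).erase w, #(N y ∩ B) ≤ #B - 2 := by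
    intro y hy
    obtain ⟨hyw, hyB'⟩ := mem_erase.1 hy
    obtain ⟨hyB, hyN⟩ := mem_sdiff.1 hyB'
    have := card_neighborFinset_inter_add_two_le (G := G) hyB hw hyw
      (fun h => hyN (mem_inter.2 ⟨(mem_neighborFinset _ _ _).2 h.symm, hyB⟩))
    omega
  have hsum := sum_le_card_nsmul _ _ _ hrest
  rw [hcard, smul_eq_mul, mul_comm] at hsum
  have hsplit := add_sum_erase _ (fun y => #(N y ∩ B)) hwB
  have := degSumOn_add_degSumOn_sdiff (G := G) (inter_subset_right : N w ∩ B ⊆ B)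
  omega

lemma two_mul_K3deg_le_of_adj {v x : V} (hvx : G.Adj v x) :
    2 * K3deg G v ≤
      2 * K3deg G x + 2 * ((#(N v) - 2) * (#(N v) - 1 - #(N x ∩ N v))) := by
  have hx : x ∈ N v := (mem_neighborFinset _ _ _).2 hvx
  have h1 := degSumOn_le_degSumOn_inter_add (G := G) hx
  have h2 := degSumOn_insert (G := G) (w := v) (s := N x ∩ N v)
    fun h => G.notMem_neighborFinset_self v (mem_inter.1 h).2
  have h3 := degSumOn_le_two_mul_K3deg (G := G) (w := x) (s := insert v (N x ∩ N v))
    (insert_subset ((mem_neighborFinset _ _ _).2 hvx.symm) inter_subset_left)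
  rw [inter_eq_right.2 inter_subset_right] at h2
  rw [two_mul_K3deg]
  omega

end InducedDegrees

lemma neighborFinset_union_compl (v : V) : N v ∪ Gᶜ.neighborFinset v = univ.erase v := by
  ext w
  simp only [mem_union, mem_neighborFinset, compl_adj, mem_erase, mem_univ, and_true]
  by_cases h : G.Adj v w
  · simp [h, h.ne']
  · simp [h, ne_comm]

lemma mem_compl_neighborFinset {v w : V} :
    w ∈ Gᶜ.neighborFinset v ↔ v ≠ w ∧ ¬ G.Adj v w := by
  rw [mem_neighborFinset, compl_adj]

lemma disjoint_neighborFinset_compl (v : V) : Disjoint (N v) (Gᶜ.neighborFinset v) :=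
  Finset.disjoint_left.2 fun _ h h' =>
    (mem_compl_neighborFinset.1 h').2 ((mem_neighborFinset _ _ _).1 h)

section Regular

variable {r : ℕ} (hreg : G.IsRegularOfDegree r)
include hreg

omit [DecidableEq V] in
lemma card_neighborFinset_of_isRegular (v : V) : #(N v) = r := hreg.degree_eq v

lemma card_compl_neighborFinset_of_isRegular (v : V) :
    #(Gᶜ.neighborFinset v) = Fintype.card V - 1 - r := hreg.compl.degree_eq v

lemma sum_card_inter_neighborFinset_erase (v : V) :
    ∑ w ∈ univ.erase v, #(N w ∩ N v) = r * (r - 1) := by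
  rw [sum_card_neighborFinset_inter_comm, sum_congr rfl fun y hy => ?_, sum_const,
    card_neighborFinset_of_isRegular hreg, smul_eq_mul]
  rw [inter_erase, inter_univ, card_erase_of_mem ((mem_neighborFinset _ _ _).2
    ((mem_neighborFinset _ _ _).1 hy).symm), card_neighborFinset_of_isRegular hreg]

lemma two_mul_K3deg_add_sum_compl (v : V) :
    2 * K3deg G v + ∑ w ∈ Gᶜ.neighborFinset v, #(N w ∩ N v) = r * (r - 1) := by
  rw [two_mul_K3deg, ← sum_card_inter_neighborFinset_erase hreg v,
    ← neighborFinset_union_compl (G := G) v, sum_union (disjoint_neighborFinset_compl v)]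
  rfl

lemma le_card_inter_add_card_of_mem_compl {v w : V} (hw : w ∈ Gᶜ.neighborFinset v) :
    2 * r + 2 ≤ #(N w ∩ N v) + Fintype.card V := by
  obtain ⟨hvw, hnadj⟩ := mem_compl_neighborFinset.1 hw
  have hsub : N w ∪ N v ⊆ (univ.erase v).erase w := by
    intro y hy
    simp only [mem_union, mem_neighborFinset] at hy
    simp only [mem_erase, mem_univ, and_true]
    rcases hy with h | h
    · exact ⟨h.ne', fun hyv => hnadj (hyv ▸ h).symm⟩
    · exact ⟨fun hyw => hnadj (hyw ▸ h), h.ne'⟩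
  have h1 := card_le_card hsub
  have h2 := card_erase_add_one (mem_erase.2 ⟨hvw.symm, mem_univ w⟩)
  have h3 := card_erase_add_one (mem_univ v)
  have h4 := card_union_add_card_inter (N w) (N v)
  rw [card_neighborFinset_of_isRegular hreg, card_neighborFinset_of_isRegular hreg,
    card_univ] at *
  omega

lemma card_compl_neighborFinset_mul_le_sum (v : V) :
    #(Gᶜ.neighborFinset v) * (2 * r + 2 - Fintype.card V) ≤
      ∑ w ∈ Gᶜ.neighborFinset v, #(N w ∩ N v) := by
  have := card_nsmul_le_sum (Gᶜ.neighborFinset v) (fun w => #(N w ∩ N v))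
    (2 * r + 2 - Fintype.card V) fun w hw => by
      have := le_card_inter_add_card_of_mem_compl hreg hw
      omega
  rwa [smul_eq_mul] at this

lemma card_inter_add_card_inter_compl {v w : V} (hw : w ∈ Gᶜ.neighborFinset v) :
    #(N w ∩ N v) + #(N w ∩ Gᶜ.neighborFinset v) = r := by
  have hvw : ¬ G.Adj w v := fun h => (mem_compl_neighborFinset.1 hw).2 h.symm
  rw [← card_union_of_disjoint ((disjoint_neighborFinset_compl v).mono inter_subset_right
    inter_subset_right), ← inter_union_distrib_left, neighborFinset_union_compl,
    inter_erase, inter_univ, erase_eq_of_notMem fun h => hvw ((mem_neighborFinset _ _ _).1 h),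
    card_neighborFinset_of_isRegular hreg]

lemma degSumOn_compl_add (v : V) :
    G.degSumOn (Gᶜ.neighborFinset v) + r * (r - 1) =
      #(Gᶜ.neighborFinset v) * r + 2 * K3deg G v := by
  have h := sum_congr rfl fun w hw => card_inter_add_card_inter_compl hreg (v := v) (w := w) hw
  rw [sum_add_distrib, sum_const, smul_eq_mul] at h
  have := two_mul_K3deg_add_sum_compl hreg v
  unfold degSumOn
  omega

variable (hirr : Function.Injective (K3deg G))
include hirr

lemma card_inter_lt_of_ne {v w : V} (hwv : w ≠ v) : #(N w ∩ N v) < r := by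
  by_contra! hle
  have h : #(N w ∩ N v) = r := le_antisymm
    ((card_le_card inter_subset_left).trans (card_neighborFinset_of_isRegular hreg w).le) hle
  refine hwv (hirr ?_)
  have hw : N w ∩ N v = N w := eq_of_subset_of_card_le inter_subset_left
    (by rw [h, card_neighborFinset_of_isRegular hreg])
  have hv : N w ∩ N v = N v := eq_of_subset_of_card_le inter_subset_right
    (by rw [h, card_neighborFinset_of_isRegular hreg])
  rw [← Nat.mul_left_cancel_iff two_pos, two_mul_K3deg, two_mul_K3deg, ← hw, hv]

lemma K3deg_bounds (v : V) :
    r * (r - 1) - (Fintype.card V - 1 - r) * (r - 1) ≤ 2 * K3deg G v ∧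
      2 * K3deg G v ≤ r * (r - 1) - (Fintype.card V - 1 - r) * (2 * r + 2 - Fintype.card V) := by
  have hsum := two_mul_K3deg_add_sum_compl hreg v
  have hlow := card_compl_neighborFinset_mul_le_sum hreg v
  have hupp := sum_le_card_nsmul (Gᶜ.neighborFinset v) (fun w => #(N w ∩ N v)) (r - 1)
    fun w hw => Nat.le_sub_one_of_lt (card_inter_lt_of_ne hreg hirr
      (mem_compl_neighborFinset.1 hw).1.symm)
  rw [smul_eq_mul, card_compl_neighborFinset_of_isRegular hreg] at hupp
  rw [card_compl_neighborFinset_of_isRegular hreg] at hlow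
  omega

end Regular

section SixteenVertices

variable (hreg : G.IsRegularOfDegree 8) (h16 : Fintype.card V = 16)
include hreg h16

lemma card_compl_neighborFinset_eq_seven (v : V) : #(Gᶜ.neighborFinset v) = 7 := by
  rw [card_compl_neighborFinset_of_isRegular hreg, h16]

lemma degSumOn_compl_eq (v : V) : G.degSumOn (Gᶜ.neighborFinset v) = 2 * K3deg G v := by
  have := degSumOn_compl_add hreg v
  rw [card_compl_neighborFinset_eq_seven hreg h16] at this
  omega

lemma sum_sub_add_two_mul_K3deg (v : V) :
    ∑ w ∈ Gᶜ.neighborFinset v, (#(Gᶜ.neighborFinset v) - 1 - #(N w ∩ Gᶜ.neighborFinset v)) +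
      2 * K3deg G v = 42 := by
  rw [← degSumOn_compl_eq hreg h16, sum_sub_add_degSumOn,
    card_compl_neighborFinset_eq_seven hreg h16]

lemma K3deg_le_K3deg_add_of_mem_compl {v w : V} (hw : w ∈ Gᶜ.neighborFinset v) :
    K3deg G v ≤
      K3deg G w + #(N w ∩ Gᶜ.neighborFinset v) + 5 * (6 - #(N w ∩ Gᶜ.neighborFinset v)) := by
  have h1 := degSumOn_le_degSumOn_inter_add (G := G) hw
  have h2 := degSumOn_le_two_mul_K3deg (G := G) (inter_subset_left :
    N w ∩ Gᶜ.neighborFinset v ⊆ N w)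
  rw [degSumOn_compl_eq hreg h16, card_compl_neighborFinset_eq_seven hreg h16] at h1
  omega

lemma ten_le_K3deg_of_mem_compl {v w : V} (hv : K3deg G v = 20)
    (hw : w ∈ Gᶜ.neighborFinset v) : 10 ≤ K3deg G w := by
  -- the degrees in `Gᶜ` restricted to `Gᶜ.neighborFinset v` sum to `2`, so each is at most `1`
  have h1 := two_mul_sub_le_sum_sub (G := G) hw
  have h2 := sum_sub_add_two_mul_K3deg hreg h16 v
  have h3 := K3deg_le_K3deg_add_of_mem_compl hreg h16 hw
  have h4 := card_compl_neighborFinset_eq_seven hreg h16 v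
  have h5 := card_neighborFinset_inter_lt (G := G) hw
  omega

lemma mem_neighborFinset_of_K3deg_le_nine {v u : V} (hv : K3deg G v = 20)
    (hu : K3deg G u ≤ 9) : u ∈ N v := by
  have huv : u ∈ N v ∪ Gᶜ.neighborFinset v := by
    rw [neighborFinset_union_compl]
    exact mem_erase.2 ⟨by rintro rfl; omega, mem_univ u⟩
  refine (mem_union.1 huv).resolve_right fun h => ?_
  have := ten_le_K3deg_of_mem_compl hreg h16 hv h
  omega

variable (hirr : Function.Injective (K3deg G))
include hirr

lemma K3deg_le_twenty (v : V) : K3deg G v ≤ 20 := by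
  by_contra! hv
  have hsum := sum_sub_add_two_mul_K3deg hreg h16 v
  have hR := card_compl_neighborFinset_eq_seven hreg h16 v
  have hmaps : ∀ w ∈ Gᶜ.neighborFinset v, K3deg G w ∈ Icc 15 20 := by
    intro w hw
    have hzero := single_le_sum (fun y _ => Nat.zero_le
      (#(Gᶜ.neighborFinset v) - 1 - #(N y ∩ Gᶜ.neighborFinset v))) hw
    have hlow := K3deg_le_K3deg_add_of_mem_compl hreg h16 hw
    have hup := sum_sub_add_two_mul_K3deg hreg h16 w
    have hne : K3deg G w ≠ K3deg G v := fun h => (mem_compl_neighborFinset.1 hw).1 (hirr h).symm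
    have hlt := card_neighborFinset_inter_lt (G := G) hw
    rw [mem_Icc]
    omega
  have := card_le_card_of_injOn _ hmaps hirr.injOn
  rw [hR, Nat.card_Icc] at this
  omega

lemma exists_K3deg_eq {k : ℕ} (hk : k ∈ Icc 4 20) (hk3 : ¬ 3 ∣ k) : ∃ u, K3deg G u = k := by
  have hsub : univ.image (K3deg G) ⊆ Icc 4 20 := by
    intro m hm
    obtain ⟨u, -, rfl⟩ := mem_image.1 hm
    have hlow := (K3deg_bounds hreg hirr u).1
    have hup := K3deg_le_twenty hreg h16 hirr u
    rw [h16] at hlow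
    rw [mem_Icc]
    omega
  have hcard : #(Icc 4 20) = #(univ.image (K3deg G)) + 1 := by
    rw [card_image_of_injective _ hirr, card_univ, h16]
    rfl
  have hdvd : 3 ∣ ∑ m ∈ univ.image (K3deg G), m := by
    rw [sum_image hirr.injOn, sum_K3deg]
    exact dvd_mul_right 3 _
  simpa using mem_of_subset_of_card_eq_add_one hsub hcard (by decide) hdvd hk hk3

lemma card_filter_neighborFinset_le_one {v : V} (hv : K3deg G v = 20) :
    #{x ∈ N v | 14 ≤ K3deg G x} ≤ 1 := by
  have hR := card_compl_neighborFinset_eq_seven hreg h16 v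
  have hsmall : #{w ∈ Gᶜ.neighborFinset v | ¬ 14 ≤ K3deg G w} ≤ 2 := by
    have hsum := sum_sub_add_two_mul_K3deg hreg h16 v
    rw [card_filter]
    calc ∑ w ∈ Gᶜ.neighborFinset v, (if ¬ 14 ≤ K3deg G w then 1 else 0)
        ≤ ∑ w ∈ Gᶜ.neighborFinset v,
            (#(Gᶜ.neighborFinset v) - 1 - #(N w ∩ Gᶜ.neighborFinset v)) :=
          sum_le_sum fun w hw => by
            have := K3deg_le_K3deg_add_of_mem_compl hreg h16 hw
            have := card_neighborFinset_inter_lt (G := G) hw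
            split_ifs <;> omega
      _ ≤ 2 := by omega
  have hbig : #{u ∈ univ.erase v | 14 ≤ K3deg G u} ≤ 6 := by
    have := card_le_card_of_injOn (s := {u ∈ univ.erase v | 14 ≤ K3deg G u})
      (t := Icc 14 19) (K3deg G) (fun u hu => by
      obtain ⟨hu, h14⟩ := mem_filter.1 hu
      have := K3deg_le_twenty hreg h16 hirr u
      have : K3deg G u ≠ 20 := fun h => (mem_erase.1 hu).1 (hirr (h.trans hv.symm))
      rw [mem_coe, mem_Icc]
      omega) hirr.injOn
    rwa [Nat.card_Icc] at this
  rw [← neighborFinset_union_compl (G := G), filter_union,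
    card_union_of_disjoint (disjoint_filter_filter (disjoint_neighborFinset_compl v))] at hbig
  have := card_filter_add_card_filter_not (s := Gᶜ.neighborFinset v) (fun w => 14 ≤ K3deg G w)
  omega

lemma false_of_K3deg_eq_twenty {v : V} (hv : K3deg G v = 20) : False := by
  have hN := card_neighborFinset_of_isRegular hreg v
  have hlow : 3 ≤ #{x ∈ N v | K3deg G x ≤ 7} := by
    calc 3 = #({4, 5, 7} : Finset ℕ) := rfl
      _ ≤ #({x ∈ N v | K3deg G x ≤ 7}.image (K3deg G)) := card_le_card fun k hk => by
          obtain ⟨hk20, hk7, hk3⟩ := (by decide : ∀ k ∈ ({4, 5, 7} : Finset ℕ),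
            k ∈ Icc 4 20 ∧ k ≤ 7 ∧ ¬ 3 ∣ k) k hk
          obtain ⟨u, rfl⟩ := exists_K3deg_eq hreg h16 hirr hk20 hk3
          exact mem_image_of_mem _ (mem_filter.2
            ⟨mem_neighborFinset_of_K3deg_le_nine hreg h16 hv (by omega), hk7⟩)
      _ ≤ #{x ∈ N v | K3deg G x ≤ 7} := card_image_le
  have hterm : ∀ x ∈ N v, #(N x ∩ N v) + (if K3deg G x ≤ 7 then 1 else 0) +
      (if ¬ 14 ≤ K3deg G x then 1 else 0) ≤ 6 := by
    intro x hx
    have h1 := two_mul_K3deg_le_of_adj ((mem_neighborFinset _ _ _).1 hx)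
    have h2 := K3deg_le_twenty hreg h16 hirr x
    have h3 : K3deg G x ≠ 20 := fun h =>
      G.notMem_neighborFinset_self v (hirr (h.trans hv.symm) ▸ hx)
    have h4 := card_neighborFinset_inter_lt (G := G) hx
    rw [hN, hv] at h1
    rw [hN] at h4
    split_ifs <;> omega
  have hsum := sum_le_sum hterm
  rw [sum_add_distrib, sum_add_distrib, ← card_filter, ← card_filter, sum_const, hN,
    smul_eq_mul] at hsum
  have h40 : G.degSumOn (N v) = 40 := by rw [← two_mul_K3deg, hv]
  have := card_filter_add_card_filter_not (s := N v) (fun x => 14 ≤ K3deg G x)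
  have := card_filter_neighborFinset_le_one hreg h16 hirr hv
  unfold degSumOn at h40
  omega

end SixteenVertices

lemma card_ne_sixteen_of_isRegular_eight (hreg : G.IsRegularOfDegree 8)
    (hirr : Function.Injective (K3deg G)) : Fintype.card V ≠ 16 := fun h16 => by
  obtain ⟨v, hv⟩ := exists_K3deg_eq hreg h16 hirr (k := 20) (by decide) (by decide)
  exact false_of_K3deg_eq_twenty hreg h16 hirr hv

end SimpleGraph

theorem stmt16 {V : Type*} [Fintype V] [DecidableEq V] [Nonempty V]
    (G : SimpleGraph V) [DecidableRel G.Adj]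
    (hreg : G.IsRegularOfDegree 8)
    (hirr : ∀ u w : V, K3deg G u = K3deg G w → u = w) :
    17 ≤ Fintype.card V := by
  obtain ⟨v⟩ := ‹Nonempty V›
  have h9 : 8 < Fintype.card V := hreg.degree_eq v ▸ G.degree_lt_card_verts v
  have hcard := card_le_of_two_mul_mem hirr (SimpleGraph.K3deg_bounds hreg hirr)
  have h16 := SimpleGraph.card_ne_sixteen_of_isRegular_eight hreg hirr
  by_contra! h
  generalize Fintype.card V = n at *
  interval_cases n <;> omega
end

section
/- If G is an 8-regular K3-irregular simple graph, then every vertex v of G satisfies K3deg(v) ≤ 22. -/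
/-!
In an `r`-regular graph write `t = K3deg G v` and, for a neighbour `a` of `v`,
`d a = #(N v ∩ N a)`, the number of triangles through the edge `va`. Double counting gives
`2 t = ∑ d a`, and more precisely `2 t = e(N v \ {a}) + 2 d a`, where `e` counts ordered adjacent
pairs. If `d a = r - 1` then `N v \ {a} = N a \ {v}`, so `K3deg a = t`; hence irregularity forces
`d a ≤ r - 2`, and the total defect `Δ = ∑ (r - 2 - d a)` satisfies `2 t + Δ = r (r - 2)`.

A tight neighbour `a` (`d a = r - 2`) misses exactly one `w ∈ N v \ {a}` and has exactly one
neighbour `z ∉ N[v]`; comparing `N v \ {a}` with `N a \ {v}` gives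
`K3deg a + d w = t + #(N v ∩ N z \ {a, w})`. The tight neighbours adjacent to a fixed `z ∉ N[v]`
all have `z` as their outer neighbour, so their triangle degrees are determined by their `w`;
irregularity then allows at most one per defective `w` and at most one with a tight `w` (such a
`w` cannot be adjacent to `z`: it would be another of these neighbours, with the same triangle
degree). This bounds `#(N v ∩ N z)`, and with it `t ≤ K3deg a + r - 2 ≤ t + 2 Δ` for every
tight `a`. As at least `r - Δ` neighbours are tight and their triangle degrees are distinct,
`r - Δ ≤ 2 Δ + 1`, i.e. `6 t + r ≤ 3 r (r - 2) + 1`, which for `r = 8` is `t ≤ 22`.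
-/

open Finset

lemma card_filter_ne_zero_le_sum {ι : Type*} (s : Finset ι) (f : ι → ℕ) :
    #{x ∈ s | f x ≠ 0} ≤ ∑ x ∈ s, f x := by
  rw [← sum_filter_ne_zero]
  simpa using card_nsmul_le_sum _ f 1 fun x hx => Nat.one_le_iff_ne_zero.2 (mem_filter.1 hx).2

lemma add_card_erase_filter_ne_zero_le_sum {ι : Type*} [DecidableEq ι] {s : Finset ι}
    {f : ι → ℕ} {w : ι} (hw : w ∈ s) :
    f w + #({x ∈ s | f x ≠ 0}.erase w) ≤ ∑ x ∈ s, f x := by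
  by_cases h : f w = 0
  · rw [h, zero_add]
    exact (card_le_card (erase_subset _ _)).trans (card_filter_ne_zero_le_sum s f)
  · have hmem : w ∈ {x ∈ s | f x ≠ 0} := mem_filter.2 ⟨hw, h⟩
    rw [← sum_filter_ne_zero, ← add_sum_erase _ _ hmem]
    refine Nat.add_le_add_left ?_ _
    simpa using card_nsmul_le_sum _ f 1 fun x hx =>
      Nat.one_le_iff_ne_zero.2 (mem_filter.1 (mem_of_mem_erase hx)).2

section TriangleDegree

variable {V : Type*} [Fintype V] {G : SimpleGraph V} [DecidableRel G.Adj]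

local notation "N" => G.neighborFinset

lemma mem_neighborFinset_comm {x y : V} : x ∈ N y ↔ y ∈ N x := by
  simp [G.adj_comm]

variable [DecidableEq V]

variable (G) in
def innerDegSum (s : Finset V) : ℕ := ∑ x ∈ s, #(s ∩ N x)

lemma innerDegSum_insert {s : Finset V} {y : V} (hy : y ∉ s) :
    innerDegSum G (insert y s) = innerDegSum G s + 2 * #(s ∩ N y) := by
  have hx : ∀ x ∈ s, #(insert y s ∩ N x) = #(s ∩ N x) + if y ∈ N x then 1 else 0 := by
    intro x _
    split_ifs with h
    · rw [insert_inter_of_mem h, card_insert_of_notMem fun h' => hy (mem_inter.1 h').1]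
    · rw [insert_inter_of_notMem h, add_zero]
  have hcount : #{x ∈ s | y ∈ N x} = #(s ∩ N y) := by
    congr 1
    ext x
    simp [G.adj_comm]
  rw [innerDegSum, sum_insert hy, sum_congr rfl hx, sum_add_distrib, sum_boole,
    insert_inter_of_notMem (G.notMem_neighborFinset_self y), Nat.cast_id, hcount, innerDegSum]
  ring

lemma card_cliqueFinset_three_filter_mem_mem {v a : V} (hav : G.Adj v a) :
    #{t ∈ G.cliqueFinset 3 | v ∈ t ∧ a ∈ t} = #(N v ∩ N a) := by
  symm
  refine card_bij (fun b _ => {v, a, b}) ?_ ?_ ?_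
  · intro b hb
    simp only [mem_inter, SimpleGraph.mem_neighborFinset] at hb
    simp [SimpleGraph.is3Clique_triple_iff, hav, hb.1, hb.2]
  · intro b hb b' hb' h
    simp only [mem_inter, SimpleGraph.mem_neighborFinset] at hb hb'
    have : b ∈ ({v, a, b'} : Finset V) := h ▸ by simp
    simp only [mem_insert, mem_singleton] at this
    rcases this with rfl | rfl | rfl
    · exact absurd hb.1 (G.irrefl)
    · exact absurd hb.2 (G.irrefl)
    · rfl
  · intro t ht
    simp only [mem_filter, SimpleGraph.mem_cliqueFinset_iff] at ht
    obtain ⟨hclique, hv, ha⟩ := ht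
    have hne : a ≠ v := (G.ne_of_adj hav).symm
    obtain ⟨b, hb⟩ : ∃ b, (t.erase v).erase a = {b} := by
      rw [← card_eq_one, card_erase_of_mem (mem_erase.2 ⟨hne, ha⟩), card_erase_of_mem hv,
        hclique.2]
    have hbt : b ∈ (t.erase v).erase a := hb ▸ mem_singleton_self b
    simp only [mem_erase] at hbt
    refine ⟨b, ?_, ?_⟩
    · simp only [mem_inter, SimpleGraph.mem_neighborFinset]
      exact ⟨hclique.1 hv hbt.2.2 (Ne.symm hbt.2.1), hclique.1 ha hbt.2.2 (Ne.symm hbt.1)⟩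
    · rw [← hb, insert_erase (mem_erase.2 ⟨hne, ha⟩), insert_erase hv]

lemma two_mul_K3deg_eq_innerDegSum (v : V) : 2 * K3deg G v = innerDegSum G (N v) := by
  set T := {t ∈ G.cliqueFinset 3 | v ∈ t}
  have hbelow : ∀ t ∈ T, #{a ∈ N v | a ∈ t} = 2 := by
    intro t ht
    simp only [T, mem_filter, SimpleGraph.mem_cliqueFinset_iff] at ht
    have : {a ∈ N v | a ∈ t} = t.erase v := by
      ext a
      simp only [mem_filter, mem_erase, SimpleGraph.mem_neighborFinset]
      exact ⟨fun h => ⟨(G.ne_of_adj h.1).symm, h.2⟩,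
        fun h => ⟨ht.1.1 ht.2 h.2 (Ne.symm h.1), h.2⟩⟩
    rw [this, card_erase_of_mem ht.2, ht.1.2]
  have habove : ∀ a ∈ N v, #(N v ∩ N a) = #{t ∈ T | a ∈ t} := by
    intro a ha
    rw [← card_cliqueFinset_three_filter_mem_mem ((G.mem_neighborFinset v a).1 ha), filter_filter]
  calc 2 * K3deg G v = ∑ t ∈ T, #{a ∈ N v | a ∈ t} := by
        rw [sum_congr rfl hbelow, sum_const, smul_eq_mul, mul_comm]; rfl
    _ = ∑ a ∈ N v, #{t ∈ T | a ∈ t} :=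
        (sum_card_bipartiteAbove_eq_sum_card_bipartiteBelow (fun a t => a ∈ t)).symm
    _ = innerDegSum G (N v) := (sum_congr rfl habove).symm

lemma two_mul_K3deg_eq_of_adj {v a : V} (hav : G.Adj v a) :
    2 * K3deg G v = innerDegSum G ((N v).erase a) + 2 * #(N v ∩ N a) := by
  have h := innerDegSum_insert (G := G) (notMem_erase a (N v))
  rwa [insert_erase ((G.mem_neighborFinset v a).2 hav), erase_inter,
    erase_eq_of_notMem fun h => G.notMem_neighborFinset_self a (mem_inter.1 h).2,
    ← two_mul_K3deg_eq_innerDegSum] at h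

lemma K3deg_add_card_inter_eq_of_erase_eq_insert {v a w z : V} (hav : G.Adj v a)
    (hv : (N v).erase a = insert w (N v ∩ N a)) (ha : (N a).erase v = insert z (N v ∩ N a))
    (hw : w ∉ N a) (hz : z ∉ N v) :
    K3deg G a + #(N v ∩ N a ∩ N w) = K3deg G v + #(N v ∩ N a ∩ N z) := by
  have hv' := two_mul_K3deg_eq_of_adj hav
  have ha' := two_mul_K3deg_eq_of_adj hav.symm
  rw [hv, innerDegSum_insert fun h => hw (mem_inter.1 h).2] at hv'
  rw [ha, innerDegSum_insert fun h => hz (mem_inter.1 h).1, inter_comm (N a)] at ha'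
  omega

section Degree

variable {v a : V}

lemma inter_neighborFinset_subset_erase (v a : V) : N v ∩ N a ⊆ (N v).erase a :=
  fun _ hx => mem_erase.2
    ⟨fun h => G.notMem_neighborFinset_self a (h ▸ (mem_inter.1 hx).2), (mem_inter.1 hx).1⟩

lemma card_erase_neighborFinset (hav : G.Adj v a) : #((N v).erase a) + 1 = G.degree v := by
  rw [card_erase_add_one ((G.mem_neighborFinset v a).2 hav), G.card_neighborFinset_eq_degree]

lemma card_inter_neighborFinset_add_one_le (hav : G.Adj v a) : #(N v ∩ N a) + 1 ≤ G.degree v :=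
  card_erase_neighborFinset hav ▸
    Nat.add_le_add_right (card_le_card (inter_neighborFinset_subset_erase v a)) 1

lemma erase_neighborFinset_eq_inter (hav : G.Adj v a) (h : #(N v ∩ N a) + 1 = G.degree v) :
    (N v).erase a = N v ∩ N a :=
  (eq_of_subset_of_card_le (inter_neighborFinset_subset_erase v a)
    (by have := card_erase_neighborFinset hav; omega)).symm

lemma exists_mem_neighborFinset_sdiff (hav : G.Adj v a) (h : #(N v ∩ N a) + 2 ≤ G.degree v) :
    ∃ w, w ∈ N v \ insert a (N a) := by
  obtain ⟨w, hw, hwS⟩ := exists_mem_notMem_of_card_lt_card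
    (s := N v ∩ N a) (t := (N v).erase a) (by have := card_erase_neighborFinset hav; omega)
  obtain ⟨hwa, hwv⟩ := mem_erase.1 hw
  exact ⟨w, mem_sdiff.2 ⟨hwv, by simp_all⟩⟩

lemma erase_neighborFinset_eq_insert {w : V} (hav : G.Adj v a)
    (h : #(N v ∩ N a) + 2 = G.degree v) (hw : w ∈ N v \ insert a (N a)) :
    (N v).erase a = insert w (N v ∩ N a) := by
  simp only [mem_sdiff, mem_insert, not_or] at hw
  refine (eq_of_subset_of_card_le ?_ ?_).symm
  · exact insert_subset (mem_erase.2 ⟨hw.2.1, hw.1⟩) (inter_neighborFinset_subset_erase v a)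
  · rw [card_insert_of_notMem fun h => hw.2.2 (mem_inter.1 h).2]
    have := card_erase_neighborFinset hav
    omega

end Degree

section Regular

variable {r : ℕ}

lemma card_inter_add_two_le (hreg : G.IsRegularOfDegree r) (hinj : Function.Injective (K3deg G))
    {v a : V} (hav : G.Adj v a) : #(N v ∩ N a) + 2 ≤ r := by
  have hle := card_inter_neighborFinset_add_one_le hav
  rw [hreg v] at hle
  by_contra hlt
  have h : #(N v ∩ N a) + 1 = r := by omega
  have hv := two_mul_K3deg_eq_of_adj hav
  have ha := two_mul_K3deg_eq_of_adj hav.symm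
  rw [erase_neighborFinset_eq_inter hav (by rw [hreg v]; exact h)] at hv
  rw [erase_neighborFinset_eq_inter hav.symm (by rw [hreg a, inter_comm]; exact h),
    inter_comm] at ha
  exact G.ne_of_adj hav (hinj (by omega))

-- The subtraction does not truncate for neighbours `a` of `v`, by `card_inter_add_two_le`.
variable (G r) in
def nbrDefect (v a : V) : ℕ := r - 2 - #(N v ∩ N a)

variable (G r) in
def tightNbrs (v : V) : Finset V := {a ∈ N v | nbrDefect G r v a = 0}

variable (G r) in
def defectiveNbrs (v : V) : Finset V := {a ∈ N v | nbrDefect G r v a ≠ 0}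

lemma card_inter_add_nbrDefect (hreg : G.IsRegularOfDegree r)
    (hinj : Function.Injective (K3deg G)) {v a : V} (ha : a ∈ N v) :
    #(N v ∩ N a) + nbrDefect G r v a + 2 = r := by
  have := card_inter_add_two_le hreg hinj ((G.mem_neighborFinset v a).1 ha)
  unfold nbrDefect
  omega

lemma K3deg_add_card_inter_eq (hreg : G.IsRegularOfDegree r) {v a w z : V} (hav : G.Adj v a)
    (hcard : #(N v ∩ N a) + 2 = r) (hw : w ∈ N v \ insert a (N a))
    (hz : z ∈ N a \ insert v (N v)) :
    K3deg G a + #(N v ∩ N w) = K3deg G v + #(((N v ∩ N z).erase a).erase w) := by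
  have hv := erase_neighborFinset_eq_insert hav (by rwa [hreg v]) hw
  have ha := erase_neighborFinset_eq_insert hav.symm (by rwa [hreg a, inter_comm]) hz
  rw [inter_comm (N a)] at ha
  simp only [mem_sdiff, mem_insert, not_or] at hw hz
  have hwS : w ∉ N v ∩ N a := fun h => hw.2.2 (mem_inter.1 h).2
  have hNw : N v ∩ N w = N v ∩ N a ∩ N w := by
    conv_lhs => rw [← insert_erase ((G.mem_neighborFinset v a).2 hav), hv]
    rw [insert_inter_of_notMem (mem_neighborFinset_comm.not.1 hw.2.2),
      insert_inter_of_notMem (G.notMem_neighborFinset_self w)]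
  have hNz : ((N v ∩ N z).erase a).erase w = N v ∩ N a ∩ N z := by
    rw [← erase_inter, ← erase_inter, hv, erase_insert hwS]
  rw [hNw, hNz]
  exact K3deg_add_card_inter_eq_of_erase_eq_insert hav hv ha hw.2.2 hz.2.2

lemma K3deg_add_card_inter_add_eq (hreg : G.IsRegularOfDegree r) {v a w z : V} (hav : G.Adj v a)
    (hcard : #(N v ∩ N a) + 2 = r) (hw : w ∈ N v \ insert a (N a))
    (hz : z ∈ N a \ insert v (N v)) :
    K3deg G a + #(N v ∩ N w) + 1 + (if w ∈ N z then 1 else 0) = K3deg G v + #(N v ∩ N z) := by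
  have hval := K3deg_add_card_inter_eq hreg hav hcard hw hz
  simp only [mem_sdiff, mem_insert, not_or] at hw hz
  have haD : a ∈ N v ∩ N z :=
    mem_inter.2 ⟨(G.mem_neighborFinset v a).2 hav, mem_neighborFinset_comm.1 hz.1⟩
  have herase := card_erase_add_one haD
  split_ifs at * with hwz
  · have := card_erase_add_one (mem_erase.2 ⟨hw.2.1, mem_inter.2 ⟨hw.1, hwz⟩⟩)
    omega
  · rw [erase_eq_of_notMem fun h => hwz (mem_inter.1 (mem_of_mem_erase h)).2] at hval
    omega

lemma mem_tightNbrs_iff (hreg : G.IsRegularOfDegree r) (hinj : Function.Injective (K3deg G))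
    {v a : V} : a ∈ tightNbrs G r v ↔ G.Adj v a ∧ #(N v ∩ N a) + 2 = r := by
  rw [tightNbrs, mem_filter, G.mem_neighborFinset]
  refine and_congr_right fun hav => ?_
  have := card_inter_add_nbrDefect hreg hinj ((G.mem_neighborFinset v a).2 hav)
  omega

lemma K3deg_add_card_inter_add_eq_of_mem_inter (hreg : G.IsRegularOfDegree r)
    (hinj : Function.Injective (K3deg G)) {v y w z : V} (hz : z ∉ insert v (N v))
    (hy : y ∈ tightNbrs G r v ∩ N z) (hw : w ∈ N v \ insert y (N y)) :
    K3deg G y + #(N v ∩ N w) + 1 + (if w ∈ N z then 1 else 0) = K3deg G v + #(N v ∩ N z) := by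
  obtain ⟨hyA, hyz⟩ := mem_inter.1 hy
  obtain ⟨hvy, hcard⟩ := (mem_tightNbrs_iff hreg hinj).1 hyA
  exact K3deg_add_card_inter_add_eq hreg hvy hcard hw
    (mem_sdiff.2 ⟨mem_neighborFinset_comm.1 hyz, hz⟩)

lemma notMem_neighborFinset_of_mem_tightNbrs (hreg : G.IsRegularOfDegree r)
    (hinj : Function.Injective (K3deg G)) {v y w z : V} (hz : z ∉ insert v (N v))
    (hy : y ∈ tightNbrs G r v ∩ N z) (hwA : w ∈ tightNbrs G r v)
    (hw : w ∈ N v \ insert y (N y)) : w ∉ N z := by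
  intro hwz
  have hyw : y ∈ N v \ insert w (N w) := by
    simp only [mem_sdiff, mem_insert, not_or] at hw ⊢
    exact ⟨(mem_filter.1 (mem_inter.1 hy).1).1, Ne.symm hw.2.1,
      mem_neighborFinset_comm.not.1 hw.2.2⟩
  have hy' := K3deg_add_card_inter_add_eq_of_mem_inter hreg hinj hz hy hw
  have hw' := K3deg_add_card_inter_add_eq_of_mem_inter hreg hinj hz (mem_inter.2 ⟨hwA, hwz⟩) hyw
  rw [if_pos hwz] at hy'
  rw [if_pos (mem_inter.1 hy).2] at hw'
  have hyr := ((mem_tightNbrs_iff hreg hinj).1 (mem_inter.1 hy).1).2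
  have hwr := ((mem_tightNbrs_iff hreg hinj).1 hwA).2
  exact (mem_sdiff.1 hw).2 (mem_insert.2 (Or.inl (hinj (by omega)).symm))

lemma card_tightNbrs_inter_le (hreg : G.IsRegularOfDegree r)
    (hinj : Function.Injective (K3deg G)) {v z : V} (hz : z ∉ insert v (N v)) :
    #(tightNbrs G r v ∩ N z) ≤ 1 + #(defectiveNbrs G r v) := by
  set s := tightNbrs G r v ∩ N z
  let P : V → Prop := fun y => ∃ w ∈ tightNbrs G r v, w ∈ N v \ insert y (N y)
  have hP : #{y ∈ s | P y} ≤ 1 := by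
    refine card_le_one.2 fun y hy y' hy' => hinj ?_
    obtain ⟨hys, w, hwA, hw⟩ := mem_filter.1 hy
    obtain ⟨hy's, w', hw'A, hw'⟩ := mem_filter.1 hy'
    have h := K3deg_add_card_inter_add_eq_of_mem_inter hreg hinj hz hys hw
    have h' := K3deg_add_card_inter_add_eq_of_mem_inter hreg hinj hz hy's hw'
    rw [if_neg (notMem_neighborFinset_of_mem_tightNbrs hreg hinj hz hys hwA hw)] at h
    rw [if_neg (notMem_neighborFinset_of_mem_tightNbrs hreg hinj hz hy's hw'A hw')] at h'
    rw [mem_tightNbrs_iff hreg hinj] at hwA hw'A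
    omega
  have hnotP : #{y ∈ s | ¬P y} ≤ #(defectiveNbrs G r v) := by
    refine card_le_card_of_forall_subsingleton (fun y w => w ∈ N v \ insert y (N y)) ?_ ?_
    · intro y hy
      obtain ⟨hys, hnP⟩ := mem_filter.1 hy
      obtain ⟨hvy, hcard⟩ := (mem_tightNbrs_iff hreg hinj).1 (mem_inter.1 hys).1
      obtain ⟨w, hw⟩ := exists_mem_neighborFinset_sdiff hvy (by rw [hreg v]; exact hcard.le)
      have hwv := (mem_sdiff.1 hw).1
      exact ⟨w, mem_filter.2 ⟨hwv, fun h => hnP ⟨w, mem_filter.2 ⟨hwv, h⟩, hw⟩⟩, hw⟩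
    · intro w _ y hy y' hy'
      have h := K3deg_add_card_inter_add_eq_of_mem_inter hreg hinj hz (mem_filter.1 hy.1).1 hy.2
      have h' :=
        K3deg_add_card_inter_add_eq_of_mem_inter hreg hinj hz (mem_filter.1 hy'.1).1 hy'.2
      exact hinj (by omega)
  have := card_filter_add_card_filter_not (s := s) (fun y => P y)
  omega

lemma card_inter_neighborFinset_le (hreg : G.IsRegularOfDegree r)
    (hinj : Function.Injective (K3deg G)) {v z : V} (hz : z ∉ insert v (N v)) (w : V) :
    #(N v ∩ N z) ≤ 1 + #(defectiveNbrs G r v) + #((defectiveNbrs G r v).erase w) +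
      (if w ∈ N z then 1 else 0) := by
  have hsplit : N v ∩ N z = (tightNbrs G r v ∩ N z) ∪ (defectiveNbrs G r v ∩ N z) := by
    rw [← union_inter_distrib_right, tightNbrs, defectiveNbrs, filter_union_filter_not_eq]
  have hdef : #(defectiveNbrs G r v ∩ N z) ≤
      #((defectiveNbrs G r v).erase w) + (if w ∈ N z then 1 else 0) := by
    split_ifs with hwz
    · have := pred_card_le_card_erase (s := defectiveNbrs G r v) (a := w)
      have := card_le_card (inter_subset_left (s₁ := defectiveNbrs G r v) (s₂ := N z))
      omega
    · refine card_le_card fun x hx => mem_erase.2 ⟨?_, (mem_inter.1 hx).1⟩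
      rintro rfl
      exact hwz (mem_inter.1 hx).2
  have := card_tightNbrs_inter_le hreg hinj hz
  have := card_union_le (tightNbrs G r v ∩ N z) (defectiveNbrs G r v ∩ N z)
  rw [hsplit]
  omega

lemma K3deg_add_mem_Icc (hreg : G.IsRegularOfDegree r) (hinj : Function.Injective (K3deg G))
    {v a : V} (ha : a ∈ tightNbrs G r v) :
    K3deg G a + (r - 2) ∈ Icc (K3deg G v) (K3deg G v + 2 * ∑ x ∈ N v, nbrDefect G r v x) := by
  obtain ⟨hav, hcard⟩ := (mem_tightNbrs_iff hreg hinj).1 ha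
  obtain ⟨w, hw⟩ := exists_mem_neighborFinset_sdiff hav (by rw [hreg v]; exact hcard.le)
  obtain ⟨z, hz⟩ := exists_mem_neighborFinset_sdiff hav.symm
    (by rw [hreg a, inter_comm]; exact hcard.le)
  have hwv := (mem_sdiff.1 hw).1
  have hval := K3deg_add_card_inter_eq hreg hav hcard hw hz
  have hformula := K3deg_add_card_inter_add_eq hreg hav hcard hw hz
  have hD := card_inter_neighborFinset_le hreg hinj (mem_sdiff.1 hz).2 w
  have hwdef := card_inter_add_nbrDefect hreg hinj hwv
  have hH := card_filter_ne_zero_le_sum (N v) (nbrDefect G r v)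
  have hHw := add_card_erase_filter_ne_zero_le_sum (f := nbrDefect G r v) hwv
  rw [← defectiveNbrs] at hH hHw
  rw [mem_Icc]
  omega

lemma two_mul_K3deg_add_sum_nbrDefect (hreg : G.IsRegularOfDegree r)
    (hinj : Function.Injective (K3deg G)) (v : V) :
    2 * K3deg G v + ∑ x ∈ N v, nbrDefect G r v x = r * (r - 2) := by
  have hsum : ∑ x ∈ N v, (#(N v ∩ N x) + nbrDefect G r v x) = ∑ _x ∈ N v, (r - 2) :=
    sum_congr rfl fun x hx => by have := card_inter_add_nbrDefect hreg hinj hx; omega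
  rw [sum_add_distrib, sum_const, G.card_neighborFinset_eq_degree, hreg v, smul_eq_mul] at hsum
  rw [two_mul_K3deg_eq_innerDegSum, innerDegSum, hsum]

theorem six_mul_K3deg_add_le (hreg : G.IsRegularOfDegree r)
    (hinj : Function.Injective (K3deg G)) (v : V) :
    6 * K3deg G v + r ≤ 3 * (r * (r - 2)) + 1 := by
  have hsum := two_mul_K3deg_add_sum_nbrDefect hreg hinj v
  have hsplit : #(tightNbrs G r v) + #(defectiveNbrs G r v) = r := by
    rw [← hreg v, ← G.card_neighborFinset_eq_degree]
    exact card_filter_add_card_filter_not _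
  have hdef := card_filter_ne_zero_le_sum (N v) (nbrDefect G r v)
  have htight : #(tightNbrs G r v) ≤ 2 * ∑ x ∈ N v, nbrDefect G r v x + 1 := by
    have := card_le_card_of_injOn (s := tightNbrs G r v) (fun a => K3deg G a + (r - 2))
      (fun a ha => K3deg_add_mem_Icc hreg hinj ha)
      (fun a _ b _ hab => hinj (Nat.add_right_cancel hab))
    rw [Nat.card_Icc] at this
    omega
  rw [← defectiveNbrs] at hdef
  omega

end Regular

end TriangleDegree

theorem stmt17 {V : Type*} [Fintype V] [DecidableEq V]
    (G : SimpleGraph V) [DecidableRel G.Adj]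
    (hreg : G.IsRegularOfDegree 8)
    (hirr : ∀ u w : V, K3deg G u = K3deg G w → u = w)
    (v : V) :
    K3deg G v ≤ 22 := by
  have := six_mul_K3deg_add_le hreg hirr v
  norm_num at this
  omega
end

section
/- There exists a 9-regular K3-irregular simple graph on 24 vertices; explicitly, the graph on vertex set {3,4,...,26} whose adjacency is given by N(3)={19,22,21,10,4,11,7,12,8}, N(4)={20,3,6,5,18,16,17,13,9}, N(5)={23,25,10,4,15,11,7,12,8}, N(6)={23,26,21,10,4,14,7,12,8}, N(7)={3,6,5,14,18,16,17,13,9}, N(8)={3,6,5,14,15,16,17,13,9}, N(9)={24,19,26,21,25,4,11,7,8}, N(10)={20,3,6,5,15,18,11,16,17}, N(11)={3,5,10,14,18,16,17,13,9}, N(12)={3,6,5,14,15,18,16,17,13}, N(13)={19,4,15,18,11,16,7,12,8}, N(14)={24,6,15,18,11,17,7,12,8}, N(15)={22,5,10,14,18,16,13,12,8}, N(16)={10,4,15,11,17,13,7,12,8}, N(17)={10,4,14,18,11,16,7,12,8}, N(18)={10,4,14,15,11,17,13,7,12}, N(19)={20,23,24,22,26,25,3,13,9}, N(20)={23,24,19,22,26,21,25,10,4},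 N(21)={20,23,24,22,26,25,3,6,9}, N(22)={20,23,24,19,26,21,25,3,15}, N(23)={20,24,19,22,26,21,25,6,5}, N(24)={20,23,19,22,26,21,25,14,9}, N(25)={20,23,24,19,22,26,21,5,9}, N(26)={20,23,24,19,22,21,25,6,9}, is 9-regular and K3-irregular (each vertex labeled k has K3-degree k). -/
/-- The edges of the discovered 9-regular `K₃`-irregular graph on 24 vertices,
given as pairs of labels in `{3, …, 26}` (each edge listed once, smaller label first). -/
def edgeList19 : List (ℕ × ℕ) := [
  (3, 4), (3, 7), (3, 8), (3, 10), (3, 11), (3, 12), (3, 19), (3, 21),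
  (3, 22), (4, 5), (4, 6), (4, 9), (4, 13), (4, 16), (4, 17), (4, 18),
  (4, 20), (5, 7), (5, 8), (5, 10), (5, 11), (5, 12), (5, 15), (5, 23),
  (5, 25), (6, 7), (6, 8), (6, 10), (6, 12), (6, 14), (6, 21), (6, 23),
  (6, 26), (7, 9), (7, 13), (7, 14), (7, 16), (7, 17), (7, 18), (8, 9),
  (8, 13), (8, 14), (8, 15), (8, 16), (8, 17), (9, 11), (9, 19), (9, 21),
  (9, 24), (9, 25), (9, 26), (10, 11), (10, 15), (10, 16), (10, 17), (10, 18),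
  (10, 20), (11, 13), (11, 14), (11, 16), (11, 17), (11, 18), (12, 13), (12, 14),
  (12, 15), (12, 16), (12, 17), (12, 18), (13, 15), (13, 16), (13, 18), (13, 19),
  (14, 15), (14, 17), (14, 18), (14, 24), (15, 16), (15, 18), (15, 22), (16, 17),
  (17, 18), (19, 20), (19, 22), (19, 23), (19, 24), (19, 25), (19, 26), (20, 21),
  (20, 22), (20, 23), (20, 24), (20, 25), (20, 26), (21, 22), (21, 23), (21, 24),
  (21, 25), (21, 26), (22, 23), (22, 24), (22, 25), (22, 26), (23, 24), (23, 25),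
  (23, 26), (24, 25), (24, 26), (25, 26)]

/-- The discovered 9-regular `K₃`-irregular graph, on vertex set `{3, …, 26}`
(encoded as `Fin 24`, where the vertex `i : Fin 24` carries the label `i + 3`). -/
def G19 : SimpleGraph (Fin 24) where
  Adj i j := ((i : ℕ) + 3, (j : ℕ) + 3) ∈ edgeList19 ∨ ((j : ℕ) + 3, (i : ℕ) + 3) ∈ edgeList19
  symm := ⟨by intro i j h; tauto⟩
  loopless := by
    have h : ∀ i : Fin 24,
        ¬(((i : ℕ) + 3, (i : ℕ) + 3) ∈ edgeList19 ∨ ((i : ℕ) + 3, (i : ℕ) + 3) ∈ edgeList19) := by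
      decide
    exact ⟨h⟩

instance : DecidableRel G19.Adj := fun i j =>
  decidable_of_iff
    (((i : ℕ) + 3, (j : ℕ) + 3) ∈ edgeList19 ∨ ((j : ℕ) + 3, (i : ℕ) + 3) ∈ edgeList19)
    Iff.rfl

/-!
Deleting `v` turns the triangles through `v` into the edges among the neighbours of `v`. So each
`K₃`-degree is a count over the 36 pairs of neighbours of a vertex, rather than over all `2 ^ 24`
vertex subsets, and that count is small enough for the kernel to evaluate.
-/

open Finset

namespace SimpleGraph

variable {V : Type*} (G : SimpleGraph V) [Fintype V] [DecidableEq V] [DecidableRel G.Adj]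

theorem card_cliqueFinset_succ_filter_mem (n : ℕ) (v : V) :
    #{t ∈ G.cliqueFinset (n + 1) | v ∈ t} =
      #{s ∈ (G.neighborFinset v).powersetCard n | G.IsClique (s : Finset V)} := by
  refine card_bij (fun t _ => t.erase v) ?_ ?_ ?_
  · intro t ht
    obtain ⟨ht, hv⟩ := mem_filter.1 ht
    rw [mem_cliqueFinset_iff] at ht
    have hn := ht.erase_of_mem hv
    refine mem_filter.2 ⟨mem_powersetCard.2 ⟨fun a ha => ?_, hn.card_eq⟩, hn.isClique⟩
    rw [mem_erase] at ha
    exact (G.mem_neighborFinset _ _).2 (ht.isClique hv ha.2 (Ne.symm ha.1))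
  · intro t₁ h₁ t₂ h₂ he
    rw [← insert_erase (mem_filter.1 h₁).2, ← insert_erase (mem_filter.1 h₂).2, he]
  · intro s hs
    obtain ⟨hs, hclique⟩ := mem_filter.1 hs
    obtain ⟨hsub, hcard⟩ := mem_powersetCard.1 hs
    have hadj : ∀ b ∈ s, G.Adj v b := fun b hb => (G.mem_neighborFinset _ _).1 (hsub hb)
    have hv : v ∉ s := fun h => G.loopless.irrefl v (hadj v h)
    refine ⟨insert v s, ?_, erase_insert hv⟩
    exact mem_filter.2 ⟨(G.mem_cliqueFinset_iff).2 (IsNClique.insert ⟨hclique, hcard⟩ hadj),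
      mem_insert_self v s⟩

theorem K3deg_eq_card_clique_pairs (v : V) :
    K3deg G v = #{s ∈ (G.neighborFinset v).powersetCard 2 | G.IsClique (s : Finset V)} :=
  G.card_cliqueFinset_succ_filter_mem 2 v

end SimpleGraph

theorem K3deg_G19 (v : Fin 24) : K3deg G19 v = v + 3 := by
  rw [G19.K3deg_eq_card_clique_pairs]
  revert v
  decide +kernel

theorem G19_isRegularOfDegree : G19.IsRegularOfDegree 9 := by
  show ∀ v, _ = 9
  decide +kernel

/-- There exists a 9-regular `K₃`-irregular graph on 24 vertices: the explicit graph `G19`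
is 9-regular, all its vertices have pairwise distinct `K₃`-degrees, and in fact the vertex
labeled `k` (i.e. `i : Fin 24` with `k = i + 3`) has `K₃`-degree exactly `k`. -/
theorem stmt19 :
    G19.IsRegularOfDegree 9 ∧
    (∀ u w : Fin 24, K3deg G19 u = K3deg G19 w → u = w) ∧
    (∀ v : Fin 24, K3deg G19 v = (v : ℕ) + 3) := by
  refine ⟨G19_isRegularOfDegree, fun u w h => ?_, K3deg_G19⟩
  rw [K3deg_G19, K3deg_G19] at h
  exact Fin.ext (Nat.add_right_cancel h)
end
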